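/- (Adaptive lower bound in the forward-march setting) Let π be a permutation and let o_1, …, o_ℓ be a sequence of forward-march operations, each an FM prefix reversal or an FM prefix transposition, that transforms π into the identity permutation, and suppose exactly r of the operations o_1, …, o_ℓ are FM prefix reversals. Then 3ℓ ≥ b′(π) + r, i.e., ℓ ≥ (b′(π) + r)/3. (This yields the adaptive approximation ratio 3 − 3r/(b′(π)+r) for SortByRTwFM3 when an optimal algorithm applies r prefix reversals.) -/

import Mathlib

/-- A permutation on `n` elements: a list `[π₀, π₁, …, π_{n+1}]` of distinct
naturals that is a rearrangement of `0, 1, …, n+1` with `π₀ = 0` and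
`π_{n+1} = n+1`. -/
def IsPerm (n : ℕ) (π : List ℕ) : Prop :=
  π.Perm (List.range (n + 2)) ∧ π.getD 0 0 = 0 ∧ π.getD (n + 1) 0 = n + 1

/-- Breakpoint count `b(π)`: `1` plus the number of indices `i` with
`2 ≤ i ≤ n+1` and `|π_i − π_{i−1}| ≠ 1` (these are exactly the consecutive
pairs of the tail `π₁, …, π_{n+1}`). -/
def bp (π : List ℕ) : ℕ :=
  1 + ((π.drop 1).zip (π.drop 2)).countP
        (fun p => !(p.1 + 1 == p.2 || p.2 + 1 == p.1))

/-- Redefined breakpoint count `b′(π)`: the number of indices `i` with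
`1 ≤ i ≤ n+1` and `|π_i − π_{i−1}| ≠ 1`. -/
def bp' (π : List ℕ) : ℕ :=
  (π.zip (π.drop 1)).countP
    (fun p => !(p.1 + 1 == p.2 || p.2 + 1 == p.1))

/-- Prefix reversal `β(1,j)`: `[π₀, π_{j−1}, …, π₁, π_j, …, π_{n+1}]`. -/
def prefixReversal (π : List ℕ) (j : ℕ) : List ℕ :=
  π.take 1 ++ ((π.drop 1).take (j - 1)).reverse ++ π.drop j

/-- Prefix transposition `τ(1,j,k)`:
`[π₀, π_j, …, π_{k−1}, π₁, …, π_{j−1}, π_k, …, π_{n+1}]`. -/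
def prefixTransposition (π : List ℕ) (j k : ℕ) : List ℕ :=
  π.take 1 ++ (π.drop j).take (k - j) ++ (π.drop 1).take (j - 1) ++ π.drop k

/-- Prefix transreversal `βτ(1,j,k)`:
`[π₀, π_j, …, π_{k−1}, π_{j−1}, …, π₁, π_k, …, π_{n+1}]`. -/
def prefixTransreversal (π : List ℕ) (j k : ℕ) : List ℕ :=
  π.take 1 ++ (π.drop j).take (k - j) ++ ((π.drop 1).take (j - 1)).reverse ++ π.drop k

/-- A prefix operation: a prefix reversal, a prefix transposition, or a
prefix transreversal. -/
inductive PrefOp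
  | rev (j : ℕ)
  | trans (j k : ℕ)
  | transrev (j k : ℕ)

/-- Apply a prefix operation to a permutation. -/
def PrefOp.apply (π : List ℕ) : PrefOp → List ℕ
  | .rev j => prefixReversal π j
  | .trans j k => prefixTransposition π j k
  | .transrev j k => prefixTransreversal π j k

/-- Validity of a prefix operation on a permutation of `n` elements:
`3 ≤ j ≤ n+1` for a prefix reversal, `2 ≤ j < k ≤ n+1` for a prefix
transposition or a prefix transreversal. -/
def PrefOp.Valid (n : ℕ) : PrefOp → Prop
  | .rev j => 3 ≤ j ∧ j ≤ n + 1
  | .trans j k => 2 ≤ j ∧ j < k ∧ k ≤ n + 1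
  | .transrev j k => 2 ≤ j ∧ j < k ∧ k ≤ n + 1

/-- Is the operation a prefix reversal? -/
def PrefOp.isRev : PrefOp → Bool
  | .rev _ => true
  | _ => false

/-- Is the operation a prefix transreversal? -/
def PrefOp.isTransrev : PrefOp → Bool
  | .transrev _ _ => true
  | _ => false

/-- Apply a sequence of prefix operations, left to right. -/
def applySeq : List ℕ → List PrefOp → List ℕ
  | π, [] => π
  | π, o :: os => applySeq (o.apply π) os

/-- All operations in the sequence are valid for permutations of `n` elements. -/
def ValidSeq (n : ℕ) (ops : List PrefOp) : Prop :=
  ∀ o ∈ ops, o.Valid n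

/-- `fm π` is `m(π) + 1`, where `m(π)` is the largest index `m` such that
`π_i = i` for all `0 ≤ i ≤ m`; i.e. the length of the longest already-sorted
prefix of `π`. -/
def fm (π : List ℕ) : ℕ :=
  ((List.range π.length).takeWhile (fun i => π.getD i 0 == i)).length

/-- Forward-march prefix reversal: reverses the segment
`π_{m(π)+1}, …, π_{j−1}` in place. -/
def fmPrefixReversal (π : List ℕ) (j : ℕ) : List ℕ :=
  π.take (fm π) ++ ((π.drop (fm π)).take (j - fm π)).reverse ++ π.drop j

/-- Forward-march prefix transposition: cuts the segment
`π_{m(π)+1}, …, π_{j−1}` and pastes it between `π_{k−1}` and `π_k`. -/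
def fmPrefixTransposition (π : List ℕ) (j k : ℕ) : List ℕ :=
  π.take (fm π) ++ (π.drop j).take (k - j) ++
    (π.drop (fm π)).take (j - fm π) ++ π.drop k

/-- A forward-march operation: an FM prefix reversal or an FM prefix
transposition. -/
inductive FMOp
  | rev (j : ℕ)
  | trans (j k : ℕ)

/-- Apply a forward-march operation. -/
def FMOp.apply (π : List ℕ) : FMOp → List ℕ
  | .rev j => fmPrefixReversal π j
  | .trans j k => fmPrefixTransposition π j k

/-- Validity of a forward-march operation on a permutation `π` of `n`
elements: `m(π)+3 ≤ j ≤ n+1` for an FM prefix reversal, and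
`m(π)+2 ≤ j ≤ n`, `j < k ≤ n+1` for an FM prefix transposition
(recall `fm π = m(π) + 1`). -/
def FMOp.Valid (n : ℕ) (π : List ℕ) : FMOp → Prop
  | .rev j => fm π + 2 ≤ j ∧ j ≤ n + 1
  | .trans j k => fm π + 1 ≤ j ∧ j ≤ n ∧ j < k ∧ k ≤ n + 1

/-- Is the forward-march operation an FM prefix reversal? -/
def FMOp.isRev : FMOp → Bool
  | .rev _ => true
  | _ => false

/-- Apply a sequence of forward-march operations, left to right. -/
def applyFMSeq : List ℕ → List FMOp → List ℕ
  | π, [] => π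
  | π, o :: os => applyFMSeq (o.apply π) os

/-- Validity of a sequence of forward-march operations, where each operation
must be valid for the permutation obtained after applying the previous ones. -/
def FMValidSeq (n : ℕ) : List ℕ → List FMOp → Prop
  | _, [] => True
  | π, o :: os => o.Valid n π ∧ FMValidSeq n (o.apply π) os

/-!
Cutting a list at `c` places and reassembling the pieces in another order (reversing some of
them) destroys at most the `c` breakpoints sitting at the cuts, since reversal preserves the
breakpoints inside a piece. An FM prefix reversal cuts at two places and an FM prefix
transposition at three, so every operation lowers `b′` by at most `3`, and a reversal by at most
`2`. As the identity has no breakpoints, `b′(π) ≤ 3ℓ - r`.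
-/

def breakCount (a b : ℕ) : ℕ := if a + 1 = b ∨ b + 1 = a then 0 else 1

def seamBreak (X Y : List ℕ) : ℕ :=
  match X.getLast?, Y.head? with
  | some a, some b => breakCount a b
  | _, _ => 0

lemma breakCount_comm (a b : ℕ) : breakCount a b = breakCount b a := by
  simp only [breakCount, or_comm]

lemma seamBreak_le_one (X Y : List ℕ) : seamBreak X Y ≤ 1 := by
  unfold seamBreak breakCount
  split <;> [split <;> simp; simp]

lemma bp'_cons_cons (a b : ℕ) (l : List ℕ) :
    bp' (a :: b :: l) = breakCount a b + bp' (b :: l) := by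
  simp only [bp', List.drop_one, List.tail_cons, List.zip_cons_cons, List.countP_cons]
  by_cases h : a + 1 = b ∨ b + 1 = a <;> simp [breakCount, h, add_comm] <;> tauto

lemma bp'_singleton (a : ℕ) : bp' [a] = 0 := rfl

lemma bp'_append (X Y : List ℕ) : bp' (X ++ Y) = bp' X + bp' Y + seamBreak X Y := by
  induction X with
  | nil => simp [bp', seamBreak]
  | cons a X ih =>
    rcases X with _ | ⟨b, X⟩
    · rcases Y with _ | ⟨b, Y⟩
      · rfl
      · rw [List.singleton_append, bp'_cons_cons, bp'_singleton]
        simp only [seamBreak, List.getLast?_singleton, List.head?_cons]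
        omega
    · have hseam : seamBreak (a :: b :: X) Y = seamBreak (b :: X) Y := by
        simp only [seamBreak, List.getLast?_cons_cons]
      rw [List.cons_append, List.cons_append, bp'_cons_cons, bp'_cons_cons, ← List.cons_append,
        ih, hseam]
      omega

lemma bp'_reverse (l : List ℕ) : bp' l.reverse = bp' l := by
  induction l with
  | nil => rfl
  | cons a l ih =>
    rw [List.reverse_cons, bp'_append, ih]
    rcases l with _ | ⟨b, l⟩
    · rfl
    · rw [bp'_cons_cons, bp'_singleton, breakCount_comm]
      simp only [seamBreak, List.getLast?_reverse, List.head?_cons]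
      omega

lemma bp'_range' (s m : ℕ) : bp' (List.range' s m) = 0 := by
  induction m generalizing s with
  | zero => rfl
  | succ m ih =>
    rcases m with _ | m
    · rfl
    · rw [List.range'_succ, List.range'_succ, bp'_cons_cons, ← List.range'_succ, ih]
      simp [breakCount]

lemma bp'_range (m : ℕ) : bp' (List.range m) = 0 := by
  rw [List.range_eq_range']
  exact bp'_range' 0 m

lemma bp'_le_bp'_reverse_middle (A B C : List ℕ) :
    bp' (A ++ B ++ C) ≤ bp' (A ++ B.reverse ++ C) + 2 := by
  simp only [bp'_append, bp'_reverse]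
  have := seamBreak_le_one A B
  have := seamBreak_le_one (A ++ B) C
  omega

lemma bp'_le_bp'_swap_middle (A B C D : List ℕ) :
    bp' (A ++ B ++ C ++ D) ≤ bp' (A ++ C ++ B ++ D) + 3 := by
  simp only [bp'_append]
  have := seamBreak_le_one A B
  have := seamBreak_le_one (A ++ B) C
  have := seamBreak_le_one (A ++ B ++ C) D
  omega

lemma take_append_take_drop (l : List ℕ) {i j : ℕ} (h : i ≤ j) :
    l.take i ++ (l.drop i).take (j - i) = l.take j := by
  rw [← List.take_add, Nat.add_sub_cancel' h]

lemma bp'_le_fmPrefixReversal (π : List ℕ) {j : ℕ} (hj : fm π ≤ j) :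
    bp' π ≤ bp' (fmPrefixReversal π j) + 2 := by
  conv_lhs => rw [← List.take_append_drop j π, ← take_append_take_drop π hj]
  exact bp'_le_bp'_reverse_middle _ _ _

lemma bp'_le_fmPrefixTransposition (π : List ℕ) {j k : ℕ} (hj : fm π ≤ j) (hk : j ≤ k) :
    bp' π ≤ bp' (fmPrefixTransposition π j k) + 3 := by
  conv_lhs => rw [← List.take_append_drop k π, ← take_append_take_drop π hk,
    ← take_append_take_drop π hj]
  exact bp'_le_bp'_swap_middle _ _ _ _

lemma FMOp.bp'_add_isRev_le {n : ℕ} {π : List ℕ} {o : FMOp} (ho : o.Valid n π) :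
    bp' π + (if o.isRev then 1 else 0) ≤ bp' (o.apply π) + 3 := by
  cases o with
  | rev j =>
    obtain ⟨hj, -⟩ := ho
    have := bp'_le_fmPrefixReversal π (by omega : fm π ≤ j)
    simpa [FMOp.isRev, FMOp.apply] using this
  | trans j k =>
    obtain ⟨hj, -, hk, -⟩ := ho
    have := bp'_le_fmPrefixTransposition π (by omega : fm π ≤ j) hk.le
    simpa [FMOp.isRev, FMOp.apply] using this

theorem sortFM_adaptive_lower_bound_general
    (n : ℕ) (π : List ℕ)
    (ops : List FMOp) (hval : FMValidSeq n π ops)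
    (hsort : applyFMSeq π ops = List.range (n + 2))
    (r : ℕ) (hr : ops.countP FMOp.isRev = r) :
    bp' π + r ≤ 3 * ops.length := by
  subst hr
  induction ops generalizing π with
  | nil =>
    rw [show π = List.range (n + 2) from hsort, bp'_range]
    rfl
  | cons o ops ih =>
    have hstep := FMOp.bp'_add_isRev_le hval.1
    have hrest := ih (o.apply π) hval.2 hsort
    rw [List.countP_cons, List.length_cons]
    split_ifs at hstep ⊢ <;> omega

/-- adaptive lower bound, forward-march setting: if a sequence
of `ℓ` forward-march operations sorts `π` and exactly `r` of them are FM
prefix reversals, then `3ℓ ≥ b′(π) + r`. -/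
theorem sortFM_adaptive_lower_bound
    (n : ℕ) (π : List ℕ) (hπ : IsPerm n π)
    (ops : List FMOp) (hval : FMValidSeq n π ops)
    (hsort : applyFMSeq π ops = List.range (n + 2))
    (r : ℕ) (hr : ops.countP FMOp.isRev = r) :
    bp' π + r ≤ 3 * ops.length :=
  sortFM_adaptive_lower_bound_general n π ops hval hsort r hr
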